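/- arXiv:2308.05952 — 2 statements merged into one kernel-verified Lean document; each statement's English description precedes it below -/
import Mathlib

section
/- In the constrained space S_0 of quaternary sequences of even length n with exactly n/2 symbols from {G,C}, the number of sequences at Hamming distance exactly r from a fixed center sequence X ∈ S_0 that remain in S_0 is Σ_{i=0}^{min(⌊r/2⌋, n/2)} binom(n/2, i)·binom(n/2, i)·binom(n−2i, r−2i)·2^{2i}. -/
def isGC (a : Fin 4) : Prop := a = 1 ∨ a = 2

instance : DecidablePred isGC := fun a => by unfold isGC; infer_instance

def gcCount {n : ℕ} (x : Fin n → Fin 4) : ℕ :=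
  (Finset.univ.filter fun i => isGC (x i)).card

def oppF (a : Fin 4) : Finset (Fin 4) := if isGC a then {0, 3} else {1, 2}

lemma mem_oppF : ∀ a b : Fin 4, b ∈ oppF a ↔ ¬ (isGC b ↔ isGC a) := by decide

lemma card_oppF : ∀ a : Fin 4, (oppF a).card = 2 := by decide

lemma partner_eq : ∀ a b : Fin 4, a ≠ b → (isGC b ↔ isGC a) → b = 3 - a := by decide

lemma partner_gc : ∀ a : Fin 4, isGC (3 - a) ↔ isGC a := by decide

lemma partner_ne : ∀ a : Fin 4, a ≠ 3 - a := by decide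

lemma perpair : ∀ a b : Fin 4,
    a ≠ b ↔ (((isGC a ∧ ¬ isGC b) ∨ (¬ isGC a ∧ isGC b)) ∨ (a ≠ b ∧ (isGC b ↔ isGC a))) := by
  decide

variable {n : ℕ}

def Agc (X : Fin n → Fin 4) : Finset (Fin n) := Finset.univ.filter fun j => isGC (X j)
def saF (X Y : Fin n → Fin 4) : Finset (Fin n) := (Agc X).filter fun j => ¬ isGC (Y j)
def sbF (X Y : Fin n → Fin 4) : Finset (Fin n) := (Agc X)ᶜ.filter fun j => isGC (Y j)
def ddF (X Y : Fin n → Fin 4) : Finset (Fin n) :=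
  Finset.univ.filter fun j => X j ≠ Y j ∧ (isGC (Y j) ↔ isGC (X j))

lemma mem_Agc {X : Fin n → Fin 4} {j} : j ∈ Agc X ↔ isGC (X j) := by simp [Agc]
lemma mem_saF {X Y : Fin n → Fin 4} {j} : j ∈ saF X Y ↔ isGC (X j) ∧ ¬ isGC (Y j) := by
  simp [saF, Agc]
lemma mem_sbF {X Y : Fin n → Fin 4} {j} : j ∈ sbF X Y ↔ ¬ isGC (X j) ∧ isGC (Y j) := by
  simp [sbF, Agc]
lemma mem_ddF {X Y : Fin n → Fin 4} {j} :
    j ∈ ddF X Y ↔ X j ≠ Y j ∧ (isGC (Y j) ↔ isGC (X j)) := by simp [ddF]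

lemma key1 (X Y : Fin n → Fin 4) :
    gcCount Y + (saF X Y).card = (Agc X).card + (sbF X Y).card := by
  have h1 : ((Agc X).filter fun j => isGC (Y j)).card + (saF X Y).card = (Agc X).card :=
    Finset.card_filter_add_card_filter_not _
  have h2 : gcCount Y
      = ((Agc X).filter fun j => isGC (Y j)).card + (sbF X Y).card := by
    unfold gcCount sbF
    rw [← Finset.card_union_of_disjoint (Finset.disjoint_filter_filter disjoint_compl_right),
      ← Finset.filter_union, Finset.union_compl]
  omega

lemma key2 (X Y : Fin n → Fin 4) :
    hammingDist X Y = (saF X Y).card + (sbF X Y).card + (ddF X Y).card := by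
  have hd : hammingDist X Y = (Finset.univ.filter fun j => X j ≠ Y j).card := rfl
  have hdisj1 : Disjoint (saF X Y) (sbF X Y) :=
    Finset.disjoint_filter_filter disjoint_compl_right
  have hdisj2 : Disjoint (saF X Y ∪ sbF X Y) (ddF X Y) := by
    rw [Finset.disjoint_left]
    intro j hj1 hj2
    rw [Finset.mem_union, mem_saF, mem_sbF] at hj1
    rw [mem_ddF] at hj2
    tauto
  have hu : (Finset.univ.filter fun j => X j ≠ Y j) = (saF X Y ∪ sbF X Y) ∪ ddF X Y := by
    ext j
    simp only [Finset.mem_filter, Finset.mem_univ, true_and, Finset.mem_union,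
      mem_saF, mem_sbF, mem_ddF]
    exact perpair (X j) (Y j)
  rw [hd, hu, Finset.card_union_of_disjoint hdisj2, Finset.card_union_of_disjoint hdisj1]

/-- In the balanced space `S_0` of quaternary sequences of even length `n` with
exactly `n/2` GC symbols, the number of sequences of `S_0` at Hamming distance
exactly `r` from a fixed center `X ∈ S_0` equals
`∑_{i=0}^{min(⌊r/2⌋, n/2)} binom(n/2,i)² binom(n−2i, r−2i) 2^{2i}`. -/
theorem balanced_sphere_card (n : ℕ) (hn : Even n) (r : ℕ)
    (X : Fin n → Fin 4) (hX : gcCount X = n / 2) :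
    (Finset.univ.filter fun Y : Fin n → Fin 4 =>
        gcCount Y = n / 2 ∧ hammingDist X Y = r).card
      = ∑ i ∈ Finset.range (min (r / 2) (n / 2) + 1),
          Nat.choose (n / 2) i * Nat.choose (n / 2) i *
            Nat.choose (n - 2 * i) (r - 2 * i) * 2 ^ (2 * i) := by
  have hnn : n % 2 = 0 := Nat.even_iff.mp hn
  have hAcard : (Agc X).card = n / 2 := hX
  have hAc : ((Agc X)ᶜ).card = n / 2 := by
    rw [Finset.card_compl, hAcard, Fintype.card_fin]; omega
  have H0 : ∀ Y ∈ (Finset.univ.filter fun Y : Fin n → Fin 4 =>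
      gcCount Y = n / 2 ∧ hammingDist X Y = r),
      (saF X Y).card ∈ Finset.range (min (r / 2) (n / 2) + 1) := by
    intro Y hY
    rw [Finset.mem_filter] at hY
    obtain ⟨-, hgc, hham⟩ := hY
    have h1 := key1 X Y
    have h2 := key2 X Y
    have h3 : (saF X Y).card ≤ (Agc X).card :=
      Finset.card_le_card (Finset.filter_subset _ _)
    rw [Finset.mem_range]
    omega
  rw [Finset.card_eq_sum_card_fiberwise H0]
  refine Finset.sum_congr rfl fun i hi => ?_
  rw [Finset.mem_range] at hi
  have hir : 2 * i ≤ r := by omega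
  have hin : 2 * i ≤ n := by omega
  have H1 : ∀ Y ∈ ((Finset.univ.filter fun Y : Fin n → Fin 4 =>
        gcCount Y = n / 2 ∧ hammingDist X Y = r).filter fun Y => (saF X Y).card = i),
      (saF X Y, sbF X Y) ∈ (Agc X).powersetCard i ×ˢ ((Agc X)ᶜ).powersetCard i := by
    intro Y hY
    simp only [Finset.mem_filter] at hY
    obtain ⟨⟨-, hgc, hham⟩, hci⟩ := hY
    have h1 := key1 X Y
    rw [Finset.mem_product, Finset.mem_powersetCard, Finset.mem_powersetCard]
    refine ⟨⟨Finset.filter_subset _ _, hci⟩, Finset.filter_subset _ _, ?_⟩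
    show (sbF X Y).card = i
    omega
  have Hfib : ∀ p ∈ (Agc X).powersetCard i ×ˢ ((Agc X)ᶜ).powersetCard i,
      (((Finset.univ.filter fun Y : Fin n → Fin 4 =>
          gcCount Y = n / 2 ∧ hammingDist X Y = r).filter fun Y =>
          (saF X Y).card = i).filter fun Y => (saF X Y, sbF X Y) = p).card
        = Nat.choose (n - 2 * i) (r - 2 * i) * 2 ^ (2 * i) := by
    rintro ⟨sA, sB⟩ hp
    rw [Finset.mem_product, Finset.mem_powersetCard, Finset.mem_powersetCard] at hp
    obtain ⟨⟨hsA, hsAc⟩, hsB, hsBc⟩ := hp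
    have hdisjAB : Disjoint sA sB := disjoint_compl_right.mono hsA hsB
    have hUcard : (sA ∪ sB).card = 2 * i := by
      rw [Finset.card_union_of_disjoint hdisjAB, hsAc, hsBc]; omega
    have hCc : ((sA ∪ sB)ᶜ).card = n - 2 * i := by
      rw [Finset.card_compl, hUcard, Fintype.card_fin]
    have H2 : ∀ Y ∈ (((Finset.univ.filter fun Y : Fin n → Fin 4 =>
          gcCount Y = n / 2 ∧ hammingDist X Y = r).filter fun Y =>
          (saF X Y).card = i).filter fun Y => (saF X Y, sbF X Y) = (sA, sB)),
        ddF X Y ∈ ((sA ∪ sB)ᶜ).powersetCard (r - 2 * i) := by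
      intro Y hY
      simp only [Finset.mem_filter, Prod.mk.injEq] at hY
      obtain ⟨⟨⟨-, hgc, hham⟩, hci⟩, hsaY, hsbY⟩ := hY
      have h2 := key2 X Y
      have h1 := key1 X Y
      rw [Finset.mem_powersetCard]
      constructor
      · intro j hj
        rw [mem_ddF] at hj
        rw [Finset.mem_compl, Finset.mem_union, ← hsaY, ← hsbY, mem_saF, mem_sbF]
        rintro (⟨ha, hb⟩ | ⟨ha, hb⟩)
        · exact hb (hj.2.mpr ha)
        · exact ha (hj.2.mp hb)
      · omega
    have Hfib2 : ∀ D ∈ ((sA ∪ sB)ᶜ).powersetCard (r - 2 * i),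
        ((((Finset.univ.filter fun Y : Fin n → Fin 4 =>
            gcCount Y = n / 2 ∧ hammingDist X Y = r).filter fun Y =>
            (saF X Y).card = i).filter fun Y =>
            (saF X Y, sbF X Y) = (sA, sB)).filter fun Y => ddF X Y = D).card
          = 2 ^ (2 * i) := by
      intro D hD
      rw [Finset.mem_powersetCard] at hD
      obtain ⟨hDs, hDc⟩ := hD
      set C : Fin n → Finset (Fin 4) := fun j =>
        if j ∈ sA ∪ sB then oppF (X j) else if j ∈ D then {3 - X j} else {X j} with hC
      have hset : (((Finset.univ.filter fun Y : Fin n → Fin 4 =>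
            gcCount Y = n / 2 ∧ hammingDist X Y = r).filter fun Y =>
            (saF X Y).card = i).filter fun Y =>
            (saF X Y, sbF X Y) = (sA, sB)).filter (fun Y => ddF X Y = D)
          = Fintype.piFinset C := by
        ext Y
        simp only [Finset.mem_filter, Finset.mem_univ, true_and, Fintype.mem_piFinset,
          Prod.mk.injEq]
        constructor
        · rintro ⟨⟨⟨⟨hgc, hham⟩, hci⟩, hsaY, hsbY⟩, hddY⟩ j
          by_cases h1 : j ∈ sA ∪ sB
          · simp only [hC, if_pos h1]
            rw [mem_oppF]
            rcases Finset.mem_union.mp h1 with h | h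
            · rw [← hsaY, mem_saF] at h
              exact fun hf => h.2 (hf.mpr h.1)
            · rw [← hsbY, mem_sbF] at h
              exact fun hf => h.1 (hf.mp h.2)
          · have hja : j ∉ saF X Y := fun hh => h1 (Finset.mem_union_left _ (hsaY ▸ hh))
            have hjb : j ∉ sbF X Y := fun hh => h1 (Finset.mem_union_right _ (hsbY ▸ hh))
            rw [mem_saF] at hja
            rw [mem_sbF] at hjb
            simp only [hC, if_neg h1]
            by_cases h2 : j ∈ D
            · rw [if_pos h2, Finset.mem_singleton]
              rw [← hddY, mem_ddF] at h2
              exact partner_eq (X j) (Y j) h2.1 h2.2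
            · rw [if_neg h2, Finset.mem_singleton]
              rw [← hddY, mem_ddF] at h2
              have hiff : isGC (Y j) ↔ isGC (X j) :=
                ⟨fun hy => Classical.byContradiction fun hx => hjb ⟨hx, hy⟩,
                 fun hx => Classical.byContradiction fun hy => hja ⟨hx, hy⟩⟩
              have hne : ¬ X j ≠ Y j := fun hne => h2 ⟨hne, hiff⟩
              exact (not_not.mp hne).symm
        · intro h
          have hiffj : ∀ j, j ∉ sA ∪ sB → (isGC (Y j) ↔ isGC (X j)) := by
            intro j hj
            have hj' := h j
            simp only [hC, if_neg hj] at hj'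
            by_cases h2 : j ∈ D
            · rw [if_pos h2, Finset.mem_singleton] at hj'
              rw [hj']
              exact partner_gc (X j)
            · rw [if_neg h2, Finset.mem_singleton] at hj'
              rw [hj']
          have hniffj : ∀ j, j ∈ sA ∪ sB → ¬ (isGC (Y j) ↔ isGC (X j)) := by
            intro j hj
            have hj' := h j
            simp only [hC, if_pos hj] at hj'
            exact (mem_oppF _ _).mp hj'
          have hsaY : saF X Y = sA := by
            ext j
            rw [mem_saF]
            by_cases hjA : j ∈ sA
            · have hX1 : isGC (X j) := mem_Agc.mp (hsA hjA)
              have hni := hniffj j (Finset.mem_union_left _ hjA)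
              simp only [hjA, iff_true]
              exact ⟨hX1, fun hb => hni (iff_of_true hb hX1)⟩
            · simp only [hjA, iff_false]
              rintro ⟨hX1, hY1⟩
              by_cases hjB : j ∈ sB
              · exact (Finset.mem_compl.mp (hsB hjB)) (mem_Agc.mpr hX1)
              · have hif := hiffj j (by simp [Finset.mem_union, hjA, hjB])
                exact hY1 (hif.mpr hX1)
          have hsbY : sbF X Y = sB := by
            ext j
            rw [mem_sbF]
            by_cases hjB : j ∈ sB
            · have hX1 : ¬ isGC (X j) :=
                fun hh => (Finset.mem_compl.mp (hsB hjB)) (mem_Agc.mpr hh)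
              have hni := hniffj j (Finset.mem_union_right _ hjB)
              simp only [hjB, iff_true]
              exact ⟨hX1, Classical.byContradiction fun hb => hni (iff_of_false hb hX1)⟩
            · simp only [hjB, iff_false]
              rintro ⟨hX1, hY1⟩
              by_cases hjA : j ∈ sA
              · exact hX1 (mem_Agc.mp (hsA hjA))
              · have hif := hiffj j (by simp [Finset.mem_union, hjA, hjB])
                exact hX1 (hif.mp hY1)
          have hddY : ddF X Y = D := by
            ext j
            rw [mem_ddF]
            by_cases h1 : j ∈ sA ∪ sB
            · have hni := hniffj j h1
              have hjD : j ∉ D := fun hh => (Finset.mem_compl.mp (hDs hh)) h1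
              simp only [hjD, iff_false]
              exact fun hh => hni hh.2
            · have hj' := h j
              simp only [hC, if_neg h1] at hj'
              by_cases h2 : j ∈ D
              · rw [if_pos h2, Finset.mem_singleton] at hj'
                simp only [h2, iff_true]
                refine ⟨?_, hiffj j h1⟩
                rw [hj']
                exact partner_ne (X j)
              · rw [if_neg h2, Finset.mem_singleton] at hj'
                simp only [h2, iff_false]
                rw [hj']
                simp
          have hsc : (saF X Y).card = i := by rw [hsaY, hsAc]
          have hbc : (sbF X Y).card = i := by rw [hsbY, hsBc]
          have hdc : (ddF X Y).card = r - 2 * i := by rw [hddY, hDc]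
          have h1 := key1 X Y
          have h2 := key2 X Y
          exact ⟨⟨⟨⟨by omega, by omega⟩, hsc⟩, hsaY, hsbY⟩, hddY⟩
      rw [hset, Fintype.card_piFinset]
      have hCcard : ∀ j, (C j).card = if j ∈ sA ∪ sB then 2 else 1 := by
        intro j
        simp only [hC]
        by_cases h1 : j ∈ sA ∪ sB
        · rw [if_pos h1, if_pos h1, card_oppF]
        · rw [if_neg h1, if_neg h1]
          by_cases h2 : j ∈ D
          · rw [if_pos h2, Finset.card_singleton]
          · rw [if_neg h2, Finset.card_singleton]
      calc ∏ j, (C j).card = ∏ j, (if j ∈ sA ∪ sB then 2 else 1) :=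
            Finset.prod_congr rfl fun j _ => hCcard j
        _ = 2 ^ (2 * i) := by
            have e1 : ∏ j ∈ (sA ∪ sB), (if j ∈ sA ∪ sB then (2 : ℕ) else 1) = 2 ^ (2 * i) := by
              rw [Finset.prod_congr rfl fun j hj => if_pos hj, Finset.prod_const, hUcard]
            have e2 : ∏ j ∈ (sA ∪ sB)ᶜ, (if j ∈ sA ∪ sB then (2 : ℕ) else 1) = 1 := by
              rw [Finset.prod_congr rfl fun j hj => if_neg (Finset.mem_compl.mp hj)]
              exact Finset.prod_const_one
            rw [← Finset.prod_mul_prod_compl (sA ∪ sB) _, e1, e2, mul_one]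
    refine Eq.trans (Finset.card_eq_sum_card_fiberwise H2) ?_
    refine Eq.trans (Finset.sum_congr rfl Hfib2) ?_
    rw [Finset.sum_const, Finset.card_powersetCard, hCc, smul_eq_mul]
  refine Eq.trans (Finset.card_eq_sum_card_fiberwise H1) ?_
  refine Eq.trans (Finset.sum_congr rfl Hfib) ?_
  rw [Finset.sum_const, Finset.card_product, Finset.card_powersetCard,
    Finset.card_powersetCard, hAcard, hAc, smul_eq_mul]
  ring
end

section
/- In the constrained GC-content Hamming ball formula, for any center with GC content w and parameters r, Δ, i₊ with max(0, Δ) ≤ i₊ ≤ min(Δ + w, r), the number of sequences obtained from the center by exactly i₊ substitutions from {A,T} to {G,C}, exactly i₊ − Δ substitutions from {G,C} to {A,T}, and r − 2i₊ + Δ GC-preserving substitutions equals binom(w, i₊−Δ)·binom(n−w, i₊)·binom(n − 2i₊ + Δ, r − 2i₊ + Δ)·2^{2i₊−Δ}, and each such sequence has GC content w + Δ and Hamming distance exactly r from the center. -/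
open Finset

/-- At a site with center symbol `a`, two symbols change the GC class, one is a GC-preserving
substitution, and `a` itself is what remains. -/
lemma card_filter_substitutionKind (a : Fin 4) (p q : Prop) [Decidable p] [Decidable q]
    (hpq : ¬(p ∧ q)) :
    #{b | (p ↔ ¬(isGC a ↔ isGC b)) ∧ (q ↔ a ≠ b ∧ (isGC a ↔ isGC b))} = if p then 2 else 1 := by
  by_cases hp : p
  · have hq : ¬q := fun hq => hpq ⟨hp, hq⟩
    simp only [hp, hq, true_iff, false_iff, if_true]
    revert a; decide
  · by_cases hq : q <;> simp only [hp, hq, true_iff, false_iff, if_false] <;> revert a <;> decide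

lemma ite_ne_eq_add_add (a b : Fin 4) :
    (if a ≠ b then 1 else 0) = (if ¬ isGC a ∧ isGC b then 1 else 0) +
      (if isGC a ∧ ¬ isGC b then 1 else 0) + (if a ≠ b ∧ (isGC a ↔ isGC b) then 1 else 0) := by
  revert a b; decide

lemma ite_isGC_add_ite_eq (a b : Fin 4) :
    (if isGC b then 1 else 0) + (if isGC a ∧ ¬ isGC b then 1 else 0) =
      (if isGC a then 1 else 0) + (if ¬ isGC a ∧ isGC b then 1 else 0) := by
  revert a b; decide

variable {n : ℕ}

def gcSites (X : Fin n → Fin 4) : Finset (Fin n) := {i | isGC (X i)}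

def atSites (X : Fin n → Fin 4) : Finset (Fin n) := {i | ¬ isGC (X i)}

def atToGCSites (X Y : Fin n → Fin 4) : Finset (Fin n) := {i | ¬ isGC (X i) ∧ isGC (Y i)}

def gcToATSites (X Y : Fin n → Fin 4) : Finset (Fin n) := {i | isGC (X i) ∧ ¬ isGC (Y i)}

def gcPreservingSites (X Y : Fin n → Fin 4) : Finset (Fin n) :=
  {i | X i ≠ Y i ∧ (isGC (X i) ↔ isGC (Y i))}

lemma card_atSites (X : Fin n → Fin 4) : #(atSites X) = n - gcCount X := by
  rw [gcCount, atSites, filter_not, card_sdiff_of_subset (filter_subset _ _), card_univ,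
    Fintype.card_fin]

lemma gcCount_add_card_gcToATSites (X Y : Fin n → Fin 4) :
    gcCount Y + #(gcToATSites X Y) = gcCount X + #(atToGCSites X Y) := by
  simp only [gcCount, gcToATSites, atToGCSites, card_filter, ← sum_add_distrib,
    ite_isGC_add_ite_eq]

lemma hammingDist_eq_card_add_card_add_card (X Y : Fin n → Fin 4) :
    hammingDist X Y = #(atToGCSites X Y) + #(gcToATSites X Y) + #(gcPreservingSites X Y) := by
  simp only [hammingDist, atToGCSites, gcToATSites, gcPreservingSites, card_filter,
    ← sum_add_distrib, ite_ne_eq_add_add]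

lemma disjoint_atSites_gcSites (X : Fin n → Fin 4) : Disjoint (atSites X) (gcSites X) :=
  disjoint_filter_filter_not _ _ _ |>.symm

lemma atToGCSites_subset (X Y : Fin n → Fin 4) : atToGCSites X Y ⊆ atSites X :=
  monotone_filter_right _ fun _ _ h => h.1

lemma gcToATSites_subset (X Y : Fin n → Fin 4) : gcToATSites X Y ⊆ gcSites X :=
  monotone_filter_right _ fun _ _ h => h.1

lemma disjoint_gcPreservingSites (X Y : Fin n → Fin 4) :
    Disjoint (gcPreservingSites X Y) (atToGCSites X Y ∪ gcToATSites X Y) := by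
  simp only [disjoint_left, gcPreservingSites, atToGCSites, gcToATSites, mem_union, mem_filter,
    mem_univ, true_and]
  tauto

lemma filter_sites_eq_piFinset (X : Fin n → Fin 4) {Sp Sm S0 : Finset (Fin n)}
    (hSp : Sp ⊆ atSites X) (hSm : Sm ⊆ gcSites X) :
    ({Y | atToGCSites X Y = Sp ∧ gcToATSites X Y = Sm ∧ gcPreservingSites X Y = S0} :
      Finset (Fin n → Fin 4)) =
      Fintype.piFinset fun i => {b | (i ∈ Sp ∪ Sm ↔ ¬(isGC (X i) ↔ isGC b)) ∧
        (i ∈ S0 ↔ X i ≠ b ∧ (isGC (X i) ↔ isGC b))} := by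
  ext Y
  simp only [Fintype.mem_piFinset, atToGCSites, gcToATSites, gcPreservingSites, Finset.ext_iff,
    mem_filter, mem_univ, true_and, mem_union, ← forall_and]
  refine forall_congr' fun i => ?_
  have hp : i ∈ Sp → ¬ isGC (X i) := fun h => (mem_filter.1 (hSp h)).2
  have hm : i ∈ Sm → isGC (X i) := fun h => (mem_filter.1 (hSm h)).2
  by_cases hx : isGC (X i) <;> by_cases hy : isGC (Y i) <;>
    simp only [hx, hy, not_true, not_false_eq_true, and_true, and_false,
      iff_true, true_iff, iff_false, false_iff] <;> tauto

lemma card_filter_sites_eq (X : Fin n → Fin 4) {Sp Sm S0 : Finset (Fin n)}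
    (hSp : Sp ⊆ atSites X) (hSm : Sm ⊆ gcSites X) (hS0 : Disjoint S0 (Sp ∪ Sm)) :
    #({Y | atToGCSites X Y = Sp ∧ gcToATSites X Y = Sm ∧ gcPreservingSites X Y = S0} :
      Finset (Fin n → Fin 4)) = 2 ^ (#Sp + #Sm) := by
  rw [filter_sites_eq_piFinset X hSp hSm, Fintype.card_piFinset,
    prod_congr rfl fun i _ =>
      card_filter_substitutionKind (X i) _ _ fun h => disjoint_left.1 hS0 h.2 h.1,
    Fintype.prod_ite_mem, prod_const,
    card_union_of_disjoint (disjoint_atSites_gcSites X |>.mono hSp hSm)]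

def substitutionPattern (X Y : Fin n → Fin 4) :
    Σ _ : Finset (Fin n) × Finset (Fin n), Finset (Fin n) :=
  ⟨(atToGCSites X Y, gcToATSites X Y), gcPreservingSites X Y⟩

def substitutionPatterns (X : Fin n → Fin 4) (ip im s : ℕ) :
    Finset (Σ _ : Finset (Fin n) × Finset (Fin n), Finset (Fin n)) :=
  ((atSites X).powersetCard ip ×ˢ (gcSites X).powersetCard im).sigma
    fun p => (p.1 ∪ p.2)ᶜ.powersetCard s

lemma card_substitutionPatterns (X : Fin n → Fin 4) (ip im s : ℕ) :
    #(substitutionPatterns X ip im s) =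
      (gcCount X).choose im * (n - gcCount X).choose ip * (n - (ip + im)).choose s := by
  rw [substitutionPatterns, card_sigma, sum_const_nat fun p hp => ?_, card_product,
    card_powersetCard, card_powersetCard, card_atSites, gcCount, gcSites,
    mul_comm (Nat.choose _ ip)]
  obtain ⟨hp1, hp2⟩ := mem_product.1 hp
  rw [mem_powersetCard] at hp1 hp2
  rw [card_powersetCard, card_compl, Fintype.card_fin,
    card_union_of_disjoint (disjoint_atSites_gcSites X |>.mono hp1.1 hp2.1), hp1.2, hp2.2]

lemma card_filter_card_sites_eq (X : Fin n → Fin 4) (ip im s : ℕ) :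
    #({Y | #(atToGCSites X Y) = ip ∧ #(gcToATSites X Y) = im ∧ #(gcPreservingSites X Y) = s} :
      Finset (Fin n → Fin 4)) =
      (gcCount X).choose im * (n - gcCount X).choose ip * (n - (ip + im)).choose s *
        2 ^ (ip + im) := by
  refine (card_eq_sum_card_fiberwise (f := substitutionPattern X)
    (t := substitutionPatterns X ip im s) fun Y hY => ?_).trans ?_
  · obtain ⟨hp, hm, h0⟩ := (mem_filter.1 hY).2
    simp only [substitutionPatterns, substitutionPattern, mem_coe, mem_sigma, mem_product,
      mem_powersetCard, subset_compl_iff_disjoint_right]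
    exact ⟨⟨⟨atToGCSites_subset X Y, hp⟩, gcToATSites_subset X Y, hm⟩,
      disjoint_gcPreservingSites X Y, h0⟩
  rw [sum_const_nat fun t ht => ?_, card_substitutionPatterns]
  obtain ⟨⟨Sp, Sm⟩, S0⟩ := t
  simp only [substitutionPatterns, mem_sigma, mem_product, mem_powersetCard,
    subset_compl_iff_disjoint_right] at ht
  obtain ⟨⟨⟨hSp, rfl⟩, hSm, rfl⟩, hS0, rfl⟩ := ht
  rw [← card_filter_sites_eq X hSp hSm hS0, filter_filter]
  congr 1
  refine filter_congr fun Y _ => ?_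
  simp only [substitutionPattern, Sigma.mk.injEq, Prod.mk.injEq, heq_eq_eq, and_assoc]
  refine ⟨fun h => h.2.2.2, ?_⟩
  rintro ⟨rfl, rfl, rfl⟩
  exact ⟨rfl, rfl, rfl, rfl, rfl, rfl⟩

theorem gc_ball_inner_term_card_general (n w r : ℕ) (Δ : ℤ) (iplus : ℕ)
    (X : Fin n → Fin 4) (hX : gcCount X = w)
    (h1 : max 0 Δ ≤ (iplus : ℤ))
    (h3 : 0 ≤ (r : ℤ) - 2 * iplus + Δ) :
    ((Finset.univ.filter fun Y : Fin n → Fin 4 =>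
        (Finset.univ.filter fun i => ¬ isGC (X i) ∧ isGC (Y i)).card = iplus ∧
        ((Finset.univ.filter fun i => isGC (X i) ∧ ¬ isGC (Y i)).card : ℤ)
          = (iplus : ℤ) - Δ ∧
        ((Finset.univ.filter fun i =>
            X i ≠ Y i ∧ (isGC (X i) ↔ isGC (Y i))).card : ℤ)
          = (r : ℤ) - 2 * iplus + Δ).card : ℤ)
      = (Nat.choose w ((iplus : ℤ) - Δ).toNat : ℤ) *
        (Nat.choose (n - w) iplus : ℤ) *
        (Nat.choose ((n : ℤ) - 2 * iplus + Δ).toNat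
            ((r : ℤ) - 2 * iplus + Δ).toNat : ℤ) *
        2 ^ (2 * (iplus : ℤ) - Δ).toNat ∧
    ∀ Y : Fin n → Fin 4,
      ((Finset.univ.filter fun i => ¬ isGC (X i) ∧ isGC (Y i)).card = iplus ∧
        ((Finset.univ.filter fun i => isGC (X i) ∧ ¬ isGC (Y i)).card : ℤ)
          = (iplus : ℤ) - Δ ∧
        ((Finset.univ.filter fun i =>
            X i ≠ Y i ∧ (isGC (X i) ↔ isGC (Y i))).card : ℤ)
          = (r : ℤ) - 2 * iplus + Δ) →
      (gcCount Y : ℤ) = (w : ℤ) + Δ ∧ hammingDist X Y = r := by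
  obtain ⟨im, him⟩ : ∃ im : ℕ, (im : ℤ) = iplus - Δ := ⟨_, Int.toNat_of_nonneg (by omega)⟩
  obtain ⟨s, hs⟩ : ∃ s : ℕ, (s : ℤ) = r - 2 * iplus + Δ := ⟨_, Int.toNat_of_nonneg h3⟩
  refine ⟨?_, fun Y hY => ?_⟩
  · rw [show (n - 2 * iplus + Δ : ℤ).toNat = n - (iplus + im) by omega,
      show (2 * iplus - Δ : ℤ).toNat = iplus + im by omega, ← him, ← hs, ← hX,
      Int.toNat_natCast, Int.toNat_natCast]
    convert congrArg (Nat.cast : ℕ → ℤ) (card_filter_card_sites_eq X iplus im s) using 3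
    · ext Y
      simp only [mem_filter, Nat.cast_inj]
      rfl
    · push_cast
      ring
  · have hgc := gcCount_add_card_gcToATSites X Y
    have hham := hammingDist_eq_card_add_card_add_card X Y
    obtain ⟨hp, hm, h0⟩ := hY
    simp only [atToGCSites, gcToATSites, gcPreservingSites] at hgc hham
    omega

/-- Inner term of the constrained GC-content Hamming ball formula: for a center
`X` with GC content `w` and parameters `r`, `Δ`, `i₊` with
`max(0,Δ) ≤ i₊ ≤ min(Δ+w, r)` (and nonnegatively many preserving
substitutions), the number of sequences `Y` differing from `X` by exactly `i₊`
AT→GC substitutions, `i₊ − Δ` GC→AT substitutions and `r − 2i₊ + Δ`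
GC-preserving substitutions equals
`binom(w, i₊−Δ)·binom(n−w, i₊)·binom(n−2i₊+Δ, r−2i₊+Δ)·2^{2i₊−Δ}`, and each
such `Y` has GC content `w + Δ` and Hamming distance exactly `r` from `X`. -/
theorem gc_ball_inner_term_card (n w r : ℕ) (Δ : ℤ) (iplus : ℕ)
    (X : Fin n → Fin 4) (hX : gcCount X = w)
    (h1 : max 0 Δ ≤ (iplus : ℤ))
    (h2 : (iplus : ℤ) ≤ min (Δ + w) (r : ℤ))
    (h3 : 0 ≤ (r : ℤ) - 2 * iplus + Δ) :
    ((Finset.univ.filter fun Y : Fin n → Fin 4 =>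
        (Finset.univ.filter fun i => ¬ isGC (X i) ∧ isGC (Y i)).card = iplus ∧
        ((Finset.univ.filter fun i => isGC (X i) ∧ ¬ isGC (Y i)).card : ℤ)
          = (iplus : ℤ) - Δ ∧
        ((Finset.univ.filter fun i =>
            X i ≠ Y i ∧ (isGC (X i) ↔ isGC (Y i))).card : ℤ)
          = (r : ℤ) - 2 * iplus + Δ).card : ℤ)
      = (Nat.choose w ((iplus : ℤ) - Δ).toNat : ℤ) *
        (Nat.choose (n - w) iplus : ℤ) *
        (Nat.choose ((n : ℤ) - 2 * iplus + Δ).toNat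
            ((r : ℤ) - 2 * iplus + Δ).toNat : ℤ) *
        2 ^ (2 * (iplus : ℤ) - Δ).toNat ∧
    ∀ Y : Fin n → Fin 4,
      ((Finset.univ.filter fun i => ¬ isGC (X i) ∧ isGC (Y i)).card = iplus ∧
        ((Finset.univ.filter fun i => isGC (X i) ∧ ¬ isGC (Y i)).card : ℤ)
          = (iplus : ℤ) - Δ ∧
        ((Finset.univ.filter fun i =>
            X i ≠ Y i ∧ (isGC (X i) ↔ isGC (Y i))).card : ℤ)
          = (r : ℤ) - 2 * iplus + Δ) →
      (gcCount Y : ℤ) = (w : ℤ) + Δ ∧ hammingDist X Y = r :=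
  gc_ball_inner_term_card_general n w r Δ iplus X hX h1 h3
end
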